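/- arXiv:1704.05421 — 3 statements merged into one kernel-verified Lean document; each statement's English description precedes it below -/
import Mathlib

section
/- In the block setting, let C : Matrix J J ℂ be positive definite and let D : Matrix J J ℂ be block diagonal and positive semidefinite, with principal diagonal blocks D_i. For each i let C_i' := ((C⁻¹)_i)⁻¹, the inverse of the i-th principal diagonal block of C⁻¹ (each (C⁻¹)_i is positive definite, hence invertible). Then det(C + D)/det(C) ≤ ∏_{i} det(C_i' + D_i)/det(C_i'), with equality if and only if D^{1/2} C⁻¹ D^{1/2} is block diagonal, where D^{1/2} is the positive semidefinite square root of D. In particular, if D is positive definite then equality holds if and only if C is block diagonal. -/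
open scoped ComplexOrder

open scoped MatrixOrder

open Matrix

set_option linter.unusedSectionVars false
set_option maxHeartbeats 1000000


namespace MaticAux

variable {m' n' : Type*} [Fintype m'] [Fintype n'] [DecidableEq m'] [DecidableEq n']

/-- A positive semidefinite matrix with nonzero determinant is positive definite. -/
lemma posDef_of_det_ne_zero {M : Matrix n' n' ℂ} (hM : M.PosSemidef) (h : M.det ≠ 0) :
    M.PosDef := by
  exact hM.posDef_iff_det_ne_zero.mpr h

/-- Positive definiteness is preserved by taking principal submatrices along an
injective map. -/
lemma posDef_submatrix_inj {M : Matrix n' n' ℂ} (hM : M.PosDef) (e : m' → n')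
    (he : Function.Injective e) : (M.submatrix e e).PosDef := by
  exact hM.submatrix he

end MaticAux



namespace MaticAux

variable {n' : Type*} [Fintype n'] [DecidableEq n']

lemma det_one_add_ge_one {R : Matrix n' n' ℂ} (hR : R.PosSemidef) :
    1 ≤ (1 + R).det ∧ ((1 + R).det = 1 ↔ R = 0) := by
  have hH := hR.1
  set U : Matrix n' n' ℂ := (hH.eigenvectorUnitary : Matrix n' n' ℂ) with hU
  set lam := hH.eigenvalues with hlam
  have hspec : R = U * diagonal (RCLike.ofReal ∘ lam) * star U := hH.spectral_theorem
  have hUU : U * star U = 1 := mem_unitaryGroup_iff.mp hH.eigenvectorUnitary.2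
  have hUU' : star U * U = 1 := mem_unitaryGroup_iff'.mp hH.eigenvectorUnitary.2
  have h1 : (1 : Matrix n' n' ℂ) + R = U * (1 + diagonal (RCLike.ofReal ∘ lam)) * star U := by
    rw [Matrix.mul_add, Matrix.add_mul, Matrix.mul_one, hUU, ← hspec]
  have hdet : (1 + R).det = ((∏ i, (1 + lam i) : ℝ) : ℂ) := by
    rw [h1, det_mul, det_mul, mul_comm, ← mul_assoc, ← det_mul, hUU', det_one, one_mul]
    have : (1 : Matrix n' n' ℂ) + diagonal (RCLike.ofReal ∘ lam)
        = diagonal (fun i => 1 + (lam i : ℂ)) := by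
      rw [← diagonal_one, diagonal_add]
      rfl
    rw [this, det_diagonal]
    push_cast
    rfl
  have hnn : ∀ i, 0 ≤ lam i := fun i => hR.eigenvalues_nonneg i
  have hprod_ge : (1 : ℝ) ≤ ∏ i, (1 + lam i) := by
    calc (1:ℝ) = ∏ _i : n', 1 := by simp
      _ ≤ ∏ i, (1 + lam i) := by
          refine Finset.prod_le_prod (fun i _ => zero_le_one) (fun i _ => ?_)
          have := hnn i
          linarith
  constructor
  · rw [hdet]
    calc (1 : ℂ) = ((1 : ℝ) : ℂ) := by norm_num
      _ ≤ _ := by exact_mod_cast hprod_ge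
  · constructor
    · intro h
      rw [hdet] at h
      have h' : (∏ i, (1 + lam i) : ℝ) = 1 := by exact_mod_cast h
      have hlam0 : ∀ i, lam i = 0 := by
        intro i
        have hle : (1:ℝ) + lam i ≤ ∏ j, (1 + lam j) := by
          rw [← Finset.mul_prod_erase Finset.univ _ (Finset.mem_univ i)]
          have h2 : (1:ℝ) ≤ ∏ j ∈ Finset.univ.erase i, (1 + lam j) := by
            calc (1:ℝ) = ∏ _j ∈ Finset.univ.erase i, 1 := by simp
              _ ≤ ∏ j ∈ Finset.univ.erase i, (1 + lam j) := by
                  refine Finset.prod_le_prod (fun j _ => zero_le_one) (fun j _ => ?_)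
                  have := hnn j
                  linarith
          have h3 : (0:ℝ) ≤ 1 + lam i := by have := hnn i; linarith
          nlinarith
        rw [h'] at hle
        have := hnn i
        linarith
      rw [hspec]
      have hz : diagonal (RCLike.ofReal ∘ lam) = (0 : Matrix n' n' ℂ) := by
        rw [show RCLike.ofReal ∘ lam = fun _ => (0:ℂ) from funext fun i => by simp [hlam0 i],
          diagonal_zero]
      rw [hz, Matrix.mul_zero, Matrix.zero_mul]
    · intro h
      rw [h]
      simp

end MaticAux

namespace MaticAux

variable {n' : Type*} [Fintype n'] [DecidableEq n']

lemma det_le_det_add {P Q : Matrix n' n' ℂ} (hP : P.PosDef) (hQ : Q.PosSemidef) :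
    P.det ≤ (P + Q).det ∧ ((P + Q).det = P.det ↔ Q = 0) := by
  set T := CFC.sqrt P with hTdef
  have hT : T.PosSemidef := (CFC.sqrt_nonneg P).posSemidef
  have hTT : T * T = P := CFC.sqrt_mul_sqrt_self P hP.posSemidef.nonneg
  have hdP : P.det ≠ 0 := hP.det_pos.ne'
  have hdT : T.det ≠ 0 := by
    intro h0
    exact hdP (by rw [← hTT, det_mul, h0, zero_mul])
  have hTi : T * T⁻¹ = 1 := mul_nonsing_inv T (by simpa using hdT)
  have hTi' : T⁻¹ * T = 1 := nonsing_inv_mul T (by simpa using hdT)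
  have hTinvH : (T⁻¹)ᴴ = T⁻¹ := by rw [conjTranspose_nonsing_inv, hT.1.eq]
  set R := T⁻¹ * Q * T⁻¹ with hRdef
  have hR : R.PosSemidef := by
    have := hQ.conjTranspose_mul_mul_same (T⁻¹)
    rwa [hTinvH] at this
  have hTRT : T * R * T = Q := by
    rw [hRdef]
    calc T * (T⁻¹ * Q * T⁻¹) * T = (T * T⁻¹) * Q * (T⁻¹ * T) := by
          simp only [Matrix.mul_assoc]
      _ = Q := by rw [hTi, hTi', Matrix.one_mul, Matrix.mul_one]
  have hPQ : P + Q = T * (1 + R) * T := by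
    rw [Matrix.mul_add, Matrix.mul_one, Matrix.add_mul, hTT, hTRT]
  have hdet : (P + Q).det = P.det * (1 + R).det := by
    rw [hPQ, det_mul, det_mul, mul_comm T.det, mul_assoc, ← det_mul, hTT]
    ring
  obtain ⟨hge, heq⟩ := det_one_add_ge_one hR
  constructor
  · rw [hdet]
    exact le_mul_of_one_le_right hP.det_pos.le hge
  · rw [hdet]
    constructor
    · intro h
      have h1 : (1 + R).det = 1 := by
        have := h.trans (mul_one P.det).symm
        exact mul_left_cancel₀ hdP this
      have hR0 : R = 0 := heq.mp h1
      rw [← hTRT, hR0, Matrix.mul_zero, Matrix.zero_mul]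
    · intro h
      have hR0 : R = 0 := by rw [hRdef, h, Matrix.mul_zero, Matrix.zero_mul]
      rw [hR0]
      simp

end MaticAux



namespace MaticAux

variable {ι : Type*} [Fintype ι] [DecidableEq ι] {σ : ι → Type*} [∀ i, Fintype (σ i)]
  [∀ i, DecidableEq (σ i)]

/-- The `i`-th diagonal block. -/
def blk (M : Matrix ((i : ι) × σ i) ((i : ι) × σ i) ℂ) (i : ι) : Matrix (σ i) (σ i) ℂ :=
  M.submatrix (Sigma.mk i) (Sigma.mk i)

/-- Block diagonality. -/
def BD (M : Matrix ((i : ι) × σ i) ((i : ι) × σ i) ℂ) : Prop :=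
  ∀ p q : (i : ι) × σ i, p.1 ≠ q.1 → M p q = 0

lemma BD_one : BD (1 : Matrix ((i : ι) × σ i) ((i : ι) × σ i) ℂ) :=
  fun p q h => one_apply_ne (fun e => h (congrArg Sigma.fst e))

lemma blk_one (i : ι) : blk (1 : Matrix ((i : ι) × σ i) ((i : ι) × σ i) ℂ) i = 1 := by
  ext a b
  by_cases h : a = b
  · subst h; simp [blk]
  · rw [blk, submatrix_apply, one_apply_ne (fun e => h (by injection e)), one_apply_ne h]

lemma blk_add (M N : Matrix ((i : ι) × σ i) ((i : ι) × σ i) ℂ) (i : ι) :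
    blk (M + N) i = blk M i + blk N i := rfl

lemma mul_blk {F : Matrix ((i : ι) × σ i) ((i : ι) × σ i) ℂ} (hF : BD F)
    (G : Matrix ((i : ι) × σ i) ((i : ι) × σ i) ℂ) (i : ι) :
    blk (F * G) i = blk F i * blk G i := by
  ext a b
  simp only [blk, submatrix_apply, Matrix.mul_apply]
  rw [← Finset.univ_sigma_univ, Finset.sum_sigma]
  rw [Fintype.sum_eq_single i (fun j hj => Finset.sum_eq_zero fun c _ => by
    rw [hF ⟨i, a⟩ ⟨j, c⟩ (Ne.symm hj), zero_mul])]

lemma blk_mul (F : Matrix ((i : ι) × σ i) ((i : ι) × σ i) ℂ)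
    {G : Matrix ((i : ι) × σ i) ((i : ι) × σ i) ℂ} (hG : BD G) (i : ι) :
    blk (F * G) i = blk F i * blk G i := by
  ext a b
  simp only [blk, submatrix_apply, Matrix.mul_apply]
  rw [← Finset.univ_sigma_univ, Finset.sum_sigma]
  rw [Fintype.sum_eq_single i (fun j hj => Finset.sum_eq_zero fun c _ => by
    rw [hG ⟨j, c⟩ ⟨i, b⟩ hj, mul_zero])]

lemma BD.mul {F G : Matrix ((i : ι) × σ i) ((i : ι) × σ i) ℂ} (hF : BD F) (hG : BD G) :
    BD (F * G) := by
  intro p q h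
  rw [Matrix.mul_apply]
  refine Finset.sum_eq_zero fun r _ => ?_
  by_cases hr : r.1 = p.1
  · rw [hG r q (hr ▸ h), mul_zero]
  · rw [hF p r (fun e => hr e.symm), zero_mul]

/-- The block diagonal matrix with prescribed blocks. -/
def bdiag (Bs : ∀ i, Matrix (σ i) (σ i) ℂ) : Matrix ((i : ι) × σ i) ((i : ι) × σ i) ℂ :=
  fun p q => if h : p.1 = q.1 then Bs p.1 p.2 (h.symm ▸ q.2) else 0

lemma bdiag_BD (Bs : ∀ i, Matrix (σ i) (σ i) ℂ) : BD (bdiag Bs) :=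
  fun _ _ h => dif_neg h

lemma blk_bdiag (Bs : ∀ i, Matrix (σ i) (σ i) ℂ) (i : ι) : blk (bdiag Bs) i = Bs i := by
  ext a b
  simp [blk, bdiag]

lemma BD.ext {F G : Matrix ((i : ι) × σ i) ((i : ι) × σ i) ℂ} (hF : BD F) (hG : BD G)
    (h : ∀ i, blk F i = blk G i) : F = G := by
  ext p q
  obtain ⟨j, a⟩ := p
  obtain ⟨l, b⟩ := q
  by_cases hjl : j = l
  · subst hjl
    exact congrFun (congrFun (h j) a) b
  · rw [hF _ _ hjl, hG _ _ hjl]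

lemma bdiag_conjTranspose (Bs : ∀ i, Matrix (σ i) (σ i) ℂ) :
    (bdiag Bs)ᴴ = bdiag (fun i => (Bs i)ᴴ) := by
  refine BD.ext (fun p q h => ?_) (bdiag_BD _) (fun i => ?_)
  · rw [conjTranspose_apply, bdiag, dif_neg (Ne.symm h), star_zero]
  · ext a b
    simp [blk, bdiag, conjTranspose_apply]

lemma bdiag_mul (Bs Cs : ∀ i, Matrix (σ i) (σ i) ℂ) :
    bdiag Bs * bdiag Cs = bdiag (fun i => Bs i * Cs i) := by
  refine BD.ext ((bdiag_BD Bs).mul (bdiag_BD Cs)) (bdiag_BD _) (fun i => ?_)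
  rw [mul_blk (bdiag_BD Bs), blk_bdiag, blk_bdiag, blk_bdiag]

lemma BD.eq_bdiag {F : Matrix ((i : ι) × σ i) ((i : ι) × σ i) ℂ} (hF : BD F) :
    F = bdiag (fun i => blk F i) :=
  BD.ext hF (bdiag_BD _) (fun i => (blk_bdiag _ i).symm)

lemma bdiag_posSemidef {Bs : ∀ i, Matrix (σ i) (σ i) ℂ} (h : ∀ i, (Bs i).PosSemidef) :
    (bdiag Bs).PosSemidef := by
  have key : bdiag Bs = (bdiag (fun i => CFC.sqrt (Bs i)))ᴴ * bdiag (fun i => CFC.sqrt (Bs i)) := by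
    rw [bdiag_conjTranspose, bdiag_mul]
    refine congrArg bdiag (funext fun i => ?_)
    rw [(CFC.sqrt_nonneg (Bs i)).posSemidef.1.eq, CFC.sqrt_mul_sqrt_self (Bs i) (h i).nonneg]
  rw [key]
  exact posSemidef_conjTranspose_mul_self _

/-- Inverse of a block diagonal positive definite matrix is block diagonal, with blocks
the inverses. -/
lemma BD.inv {F : Matrix ((i : ι) × σ i) ((i : ι) × σ i) ℂ} (hF : BD F)
    (hblk : ∀ i, (blk F i).det ≠ 0) :
    F⁻¹ = bdiag (fun i => (blk F i)⁻¹) := by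
  refine inv_eq_right_inv ?_
  rw [hF.eq_bdiag, bdiag_mul]
  refine BD.ext (bdiag_BD _) BD_one (fun i => ?_)
  rw [blk_bdiag, blk_one, blk_bdiag]
  exact mul_nonsing_inv _ (by simpa using hblk i)

end MaticAux

namespace MaticAux

theorem fischer : ∀ (N : ℕ) (ι : Type) [Fintype ι] [DecidableEq ι] (σ : ι → Type)
    [∀ i, Fintype (σ i)] [∀ i, DecidableEq (σ i)], Fintype.card ι ≤ N →
    ∀ {M : Matrix ((i : ι) × σ i) ((i : ι) × σ i) ℂ}, M.PosDef →
    M.det ≤ ∏ i, (blk M i).det ∧ (M.det = ∏ i, (blk M i).det ↔ BD M) := by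
  intro N
  induction N with
  | zero =>
    intro ι _ _ σ _ _ hcard M hM
    haveI : IsEmpty ι := Fintype.card_eq_zero_iff.mp (Nat.le_zero.mp hcard)
    have h1 : M.det = 1 := det_isEmpty
    have h2 : ∏ i : ι, (blk M i).det = 1 := by simp
    exact ⟨by rw [h1, h2], by
      constructor
      · intro _ p _ _
        exact isEmptyElim p.1
      · intro _
        rw [h1, h2]⟩
  | succ N ih =>
    intro ι _ _ σ _ _ hcard M hM
    by_cases hcc : Fintype.card ι = 0
    · haveI : IsEmpty ι := Fintype.card_eq_zero_iff.mp hcc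
      have h1 : M.det = 1 := det_isEmpty
      have h2 : ∏ i : ι, (blk M i).det = 1 := by simp
      exact ⟨by rw [h1, h2], by
        constructor
        · intro _ p _ _
          exact isEmptyElim p.1
        · intro _
          rw [h1, h2]⟩
    haveI : Nonempty ι := Fintype.card_pos_iff.mp (Nat.pos_of_ne_zero hcc)
    obtain ⟨i₀⟩ := ‹Nonempty ι›
    set e : σ i₀ ⊕ ((j : {j : ι // j ≠ i₀}) × σ j.1) ≃ ((i : ι) × σ i) :=
      { toFun := fun x => Sum.elim (fun a => ⟨i₀, a⟩) (fun p => ⟨p.1.1, p.2⟩) x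
        invFun := fun p => if h : p.1 = i₀ then Sum.inl (h ▸ p.2) else Sum.inr ⟨⟨p.1, h⟩, p.2⟩
        left_inv := by
          rintro (a | ⟨⟨j, hj⟩, a⟩)
          · simp
          · simp [hj]
        right_inv := by
          rintro ⟨j, a⟩
          by_cases h : j = i₀
          · subst h; simp
          · simp [h] } with he
    set N' := M.submatrix e e with hN'def
    have hN' : N'.PosDef := posDef_submatrix_inj hM e e.injective
    set A := blk M i₀ with hA_def
    set B := N'.toBlocks₁₂ with hB_def
    set D' := N'.toBlocks₂₂ with hD'_def
    have hA11 : N'.toBlocks₁₁ = A := rfl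
    have hC'B : N'.toBlocks₂₁ = Bᴴ := by
      ext p q
      exact (hN'.1.apply _ _).symm
    have hfb : N' = fromBlocks A B Bᴴ D' := by
      rw [← fromBlocks_toBlocks N', hC'B, hA11]
    have hA : A.PosDef := posDef_submatrix_inj hM (Sigma.mk i₀) sigma_mk_injective
    have hD' : D'.PosDef := by
      refine posDef_submatrix_inj hM (fun p : (j : {j : ι // j ≠ i₀}) × σ j.1 => (⟨p.1.1, p.2⟩ : (i : ι) × σ i)) ?_
      intro p q h
      have h1 : p.1.1 = q.1.1 := congrArg Sigma.fst h
      exact Sigma.ext (Subtype.ext h1) (Sigma.mk.inj_iff.mp h).2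
    letI : Invertible A := hA.isUnit.invertible
    have hdetN' : N'.det = A.det * (D' - Bᴴ * A⁻¹ * B).det := by
      rw [hfb, det_fromBlocks₁₁, invOf_eq_nonsing_inv]
    set S := Bᴴ * A⁻¹ * B with hS_def
    have hS : S.PosSemidef := hA.inv.posSemidef.conjTranspose_mul_mul_same B
    have hDS_psd : (D' - S).PosSemidef :=
      (PosDef.fromBlocks₁₁ B D' hA).mp (hfb ▸ hN'.posSemidef)
    have hdetM : M.det = A.det * (D' - S).det := by
      rw [← det_submatrix_equiv_self e M, ← hN'def, hdetN']
    have hDS_det : (D' - S).det ≠ 0 := by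
      intro h0
      apply hN'.det_pos.ne'
      rw [hdetN', h0, mul_zero]
    have hDS : (D' - S).PosDef := posDef_of_det_ne_zero hDS_psd hDS_det
    obtain ⟨hle1, heq1⟩ := det_le_det_add hDS hS
    rw [sub_add_cancel] at hle1 heq1
    -- S = 0 ↔ B = 0
    have hS0B : S = 0 ↔ B = 0 := by
      constructor
      · intro h0
        have key : ∀ x, star (B *ᵥ x) ⬝ᵥ A⁻¹ *ᵥ (B *ᵥ x) = star x ⬝ᵥ S *ᵥ x := by
          intro x
          rw [hS_def]
          simp only [star_mulVec, dotProduct_mulVec, vecMul_vecMul, Matrix.mul_assoc]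
        have hBx : ∀ x, B *ᵥ x = 0 := by
          intro x
          by_contra hne
          have := hA.inv.dotProduct_mulVec_pos hne
          rw [key, h0] at this
          simp at this
        ext a q
        have := congrFun (hBx (Pi.single q 1)) a
        simpa [mulVec, dotProduct, Pi.single_apply] using this
      · intro h0
        rw [hS_def, h0]
        simp
    -- induction hypothesis for D'
    have hcard' : Fintype.card {j : ι // j ≠ i₀} ≤ N := by
      have h1 : Fintype.card {j : ι // ¬ j = i₀} = Fintype.card ι - Fintype.card {j : ι // j = i₀} :=
        Fintype.card_subtype_compl _
      have h2 : Fintype.card {j : ι // j = i₀} = 1 := Fintype.card_subtype_eq i₀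
      have h3 : Fintype.card {j : ι // j ≠ i₀} = Fintype.card {j : ι // ¬ j = i₀} := rfl
      omega
    obtain ⟨ihle, ihiff⟩ := ih {j : ι // j ≠ i₀} (fun j => σ j.1) hcard' hD'
    have hblkD' : ∀ j : {j : ι // j ≠ i₀}, blk D' j = blk M j.1 := fun j => rfl
    -- product splitting
    have hprod : ∏ i, (blk M i).det
        = (blk M i₀).det * ∏ j : {j : ι // j ≠ i₀}, (blk D' j).det := by
      rw [Fintype.prod_eq_mul_prod_compl i₀]
      congr 1
      calc ∏ i ∈ ({i₀}ᶜ : Finset ι), (blk M i).det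
          = ∏ j : {j : ι // j ≠ i₀}, (blk M j.1).det :=
            Finset.prod_subtype ({i₀}ᶜ : Finset ι) (fun x => by simp) (fun j => (blk M j).det)
        _ = ∏ j : {j : ι // j ≠ i₀}, (blk D' j).det :=
            Finset.prod_congr rfl (fun j _ => by rw [hblkD'])
    have hdA : A.det ≠ 0 := hA.det_pos.ne'
    have hxy : (D' - S).det ≤ D'.det := hle1
    have hyz : D'.det ≤ ∏ j : {j : ι // j ≠ i₀}, (blk D' j).det := ihle
    constructor
    · rw [hdetM, hprod, ← hA_def]
      exact mul_le_mul_of_nonneg_left (hxy.trans hyz) hA.det_pos.le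
    · rw [hdetM, hprod, ← hA_def]
      have hcancel : A.det * (D' - S).det = A.det * (∏ j : {j : ι // j ≠ i₀}, (blk D' j).det)
          ↔ (D' - S).det = ∏ j : {j : ι // j ≠ i₀}, (blk D' j).det :=
        ⟨fun h => mul_left_cancel₀ hdA h, fun h => by rw [h]⟩
      rw [hcancel]
      have hsplit : (D' - S).det = (∏ j : {j : ι // j ≠ i₀}, (blk D' j).det)
          ↔ ((D' - S).det = D'.det ∧ D'.det = ∏ j : {j : ι // j ≠ i₀}, (blk D' j).det) := by
        constructor
        · intro h
          have h2 : D'.det = ∏ j : {j : ι // j ≠ i₀}, (blk D' j).det :=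
            le_antisymm hyz (h ▸ hxy)
          exact ⟨h.trans h2.symm, h2⟩
        · rintro ⟨h1, h2⟩
          exact h1.trans h2
      rw [hsplit]
      have h1iff : (D' - S).det = D'.det ↔ B = 0 := by
        rw [← hS0B]
        constructor
        · intro h
          exact heq1.mp h.symm
        · intro h
          exact (heq1.mpr h).symm
      rw [h1iff, ihiff]
      -- BD M ↔ B = 0 ∧ BD D'
      constructor
      · rintro ⟨hB0, hD'bd⟩ p q hpq
        have hp := (e.apply_symm_apply p).symm
        have hq := (e.apply_symm_apply q).symm
        have hMN : M p q = N' (e.symm p) (e.symm q) := by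
          rw [hN'def, submatrix_apply, e.apply_symm_apply, e.apply_symm_apply]
        rw [hMN]
        rcases hsp : e.symm p with a | a <;> rcases hsq : e.symm q with b | b
        · exfalso
          rw [hsp] at hp
          rw [hsq] at hq
          apply hpq
          rw [hp, hq]
          rfl
        · have : N' (Sum.inl a) (Sum.inr b) = B a b := rfl
          rw [this, hB0]
          rfl
        · have : N' (Sum.inr a) (Sum.inl b) = Bᴴ a b := by rw [← hC'B]; rfl
          rw [this, hB0]
          simp
        · have : N' (Sum.inr a) (Sum.inr b) = D' a b := rfl
          rw [this]
          refine hD'bd a b ?_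
          intro hab
          apply hpq
          rw [hp, hq, hsp, hsq]
          show (⟨a.1.1, a.2⟩ : (i : ι) × σ i).1 = (⟨b.1.1, b.2⟩ : (i : ι) × σ i).1
          simp [hab]
      · intro hbd
        constructor
        · ext a p
          have : B a p = M ⟨i₀, a⟩ ⟨p.1.1, p.2⟩ := rfl
          rw [this, hbd _ _ (Ne.symm p.1.2)]
          rfl
        · intro p q hpq
          have : D' p q = M ⟨p.1.1, p.2⟩ ⟨q.1.1, q.2⟩ := rfl
          rw [this, hbd _ _ ?_]
          intro hh
          exact hpq (Subtype.ext hh)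

end MaticAux



/-- The `i`-th principal diagonal block of a matrix indexed by the disjoint-union index
type `(i : Fin k) × Fin (n i)`. -/
def diagBlock {k : ℕ} {n : Fin k → ℕ}
    (C : Matrix ((i : Fin k) × Fin (n i)) ((i : Fin k) × Fin (n i)) ℂ) (i : Fin k) :
    Matrix (Fin (n i)) (Fin (n i)) ℂ :=
  fun a b => C ⟨i, a⟩ ⟨i, b⟩

/-- A matrix indexed by the disjoint-union index type is block diagonal if all entries
outside the principal diagonal blocks vanish. -/
def IsBlockDiagonal {k : ℕ} {n : Fin k → ℕ}
    (C : Matrix ((i : Fin k) × Fin (n i)) ((i : Fin k) × Fin (n i)) ℂ) : Prop :=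
  ∀ p q : (i : Fin k) × Fin (n i), p.1 ≠ q.1 → C p q = 0

/-- The pinching of a matrix indexed by the disjoint-union index type: the block diagonal
matrix with the same principal diagonal blocks. -/
def pinch {k : ℕ} {n : Fin k → ℕ}
    (C : Matrix ((i : Fin k) × Fin (n i)) ((i : Fin k) × Fin (n i)) ℂ) :
    Matrix ((i : Fin k) × Fin (n i)) ((i : Fin k) × Fin (n i)) ℂ :=
  fun p q => if p.1 = q.1 then C p q else 0

open scoped MatrixOrder

/-- Matic's second inequality in the block setting: for `C` positive definite and `D`
block diagonal positive semidefinite, writing `Cᵢ' := ((C⁻¹)ᵢ)⁻¹` for the inverses of the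
principal diagonal blocks of `C⁻¹` (each `(C⁻¹)ᵢ` being positive definite),
`det(C + D)/det C ≤ ∏ i, det(Cᵢ' + Dᵢ)/det(Cᵢ')`, with equality iff
`D^{1/2} C⁻¹ D^{1/2}` is block diagonal; in particular when `D` is positive definite,
equality holds iff `C` is block diagonal. -/
theorem matic_det_inequality_two {k : ℕ} {n : Fin k → ℕ} (hn : ∀ i, 0 < n i)
    {C D : Matrix ((i : Fin k) × Fin (n i)) ((i : Fin k) × Fin (n i)) ℂ}
    (hC : C.PosDef) (hD : D.PosSemidef) (hDbd : IsBlockDiagonal D) :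
    (∀ i, (diagBlock C⁻¹ i).PosDef) ∧
      (C + D).det / C.det
        ≤ ∏ i, ((diagBlock C⁻¹ i)⁻¹ + diagBlock D i).det / ((diagBlock C⁻¹ i)⁻¹).det ∧
      ((C + D).det / C.det
          = ∏ i, ((diagBlock C⁻¹ i)⁻¹ + diagBlock D i).det / ((diagBlock C⁻¹ i)⁻¹).det ↔
        IsBlockDiagonal (CFC.sqrt D * C⁻¹ * CFC.sqrt D)) ∧
      (D.PosDef →
        ((C + D).det / C.det
            = ∏ i, ((diagBlock C⁻¹ i)⁻¹ + diagBlock D i).det / ((diagBlock C⁻¹ i)⁻¹).det ↔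
          IsBlockDiagonal C)) := by
  classical
  open Matrix MaticAux in
  have hconv : ∀ (M : Matrix ((i : Fin k) × Fin (n i)) ((i : Fin k) × Fin (n i)) ℂ) i,
      diagBlock M i = MaticAux.blk M i := fun _ _ => rfl
  have hconv2 : ∀ (M : Matrix ((i : Fin k) × Fin (n i)) ((i : Fin k) × Fin (n i)) ℂ),
      IsBlockDiagonal M ↔ MaticAux.BD M := fun _ => Iff.rfl
  have hCinv : (C⁻¹).PosDef := hC.inv
  have hdC : C.det ≠ 0 := hC.det_pos.ne'
  have part1 : ∀ i, (diagBlock C⁻¹ i).PosDef := fun i =>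
    MaticAux.posDef_submatrix_inj hCinv (Sigma.mk i) sigma_mk_injective
  -- the square root of D is block diagonal
  have hDi : ∀ i, (diagBlock D i).PosSemidef := fun i => hD.submatrix (Sigma.mk i)
  set F := MaticAux.bdiag (fun i => CFC.sqrt (diagBlock D i)) with hFdef
  have hFpsd : F.PosSemidef := MaticAux.bdiag_posSemidef (fun i => (CFC.sqrt_nonneg (diagBlock D i)).posSemidef)
  have hFF : F ^ 2 = D := by
    rw [pow_two, hFdef, MaticAux.bdiag_mul]
    have h1 : (fun i => CFC.sqrt (diagBlock D i) * CFC.sqrt (diagBlock D i)) = fun i => MaticAux.blk D i := by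
      funext i
      exact CFC.sqrt_mul_sqrt_self _ (hDi i).nonneg
    rw [h1]
    exact (MaticAux.BD.eq_bdiag ((hconv2 D).mp hDbd)).symm
  have hEF : CFC.sqrt D = F := CFC.sqrt_unique (by rw [← sq]; exact hFF) hFpsd.nonneg
  set E := CFC.sqrt D with hEdef
  have hEbd : MaticAux.BD E := hEF ▸ MaticAux.bdiag_BD _
  have hEpsd : E.PosSemidef := (CFC.sqrt_nonneg D).posSemidef
  have hEH : Eᴴ = E := hEpsd.1
  have hEE : E * E = D := CFC.sqrt_mul_sqrt_self D hD.nonneg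
  set X := E * C⁻¹ * E with hXdef
  have hXpsd : X.PosSemidef := by
    have h := hCinv.posSemidef.conjTranspose_mul_mul_same E
    rwa [hEH] at h
  set Mm := 1 + X with hMdef
  have hMm : Mm.PosDef := Matrix.PosDef.one.add_posSemidef hXpsd
  -- blocks of Mm
  have hXblk : ∀ i, MaticAux.blk X i
      = MaticAux.blk E i * MaticAux.blk C⁻¹ i * MaticAux.blk E i := by
    intro i
    rw [hXdef, MaticAux.blk_mul _ hEbd, MaticAux.mul_blk hEbd]
  have hMblk : ∀ i, MaticAux.blk Mm i = 1 + MaticAux.blk X i := by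
    intro i
    rw [hMdef, MaticAux.blk_add, MaticAux.blk_one]
  -- LHS as det Mm
  have hCD : C + D = C * (1 + C⁻¹ * D) := by
    rw [Matrix.mul_add, Matrix.mul_one, ← Matrix.mul_assoc,
      Matrix.mul_nonsing_inv _ (by simpa using hdC), Matrix.one_mul]
  have hdet1 : (1 + C⁻¹ * D).det = Mm.det := by
    rw [← hEE, ← Matrix.mul_assoc, Matrix.det_one_add_mul_comm, hMdef, hXdef,
      Matrix.mul_assoc]
  have hLHS : (C + D).det / C.det = Mm.det := by
    rw [hCD, Matrix.det_mul, hdet1]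
    field_simp
  -- RHS terms as dets of blocks of Mm
  have hterm : ∀ i, ((diagBlock C⁻¹ i)⁻¹ + diagBlock D i).det / ((diagBlock C⁻¹ i)⁻¹).det
      = (MaticAux.blk Mm i).det := by
    intro i
    have hAi := part1 i
    have hdAi : (diagBlock C⁻¹ i).det ≠ 0 := hAi.det_pos.ne'
    have hdAinv : ((diagBlock C⁻¹ i)⁻¹).det ≠ 0 := hAi.inv.det_pos.ne'
    have h1 : (diagBlock C⁻¹ i)⁻¹ + diagBlock D i
        = (diagBlock C⁻¹ i)⁻¹ * (1 + diagBlock C⁻¹ i * diagBlock D i) := by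
      rw [Matrix.mul_add, Matrix.mul_one, ← Matrix.mul_assoc,
        Matrix.nonsing_inv_mul _ (by simpa using hdAi), Matrix.one_mul]
    rw [h1, Matrix.det_mul, mul_comm, mul_div_assoc, div_self hdAinv, mul_one]
    have hDblk : diagBlock D i = MaticAux.blk E i * MaticAux.blk E i := by
      rw [hconv, ← hEE, MaticAux.mul_blk hEbd]
    rw [hDblk, hconv, ← Matrix.mul_assoc, Matrix.det_one_add_mul_comm, hMblk, hXblk,
      Matrix.mul_assoc]
  have hprod : (∏ i, ((diagBlock C⁻¹ i)⁻¹ + diagBlock D i).det / ((diagBlock C⁻¹ i)⁻¹).det)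
      = ∏ i, (MaticAux.blk Mm i).det :=
    Finset.prod_congr rfl fun i _ => hterm i
  obtain ⟨hle, hiff⟩ :=
    MaticAux.fischer (Fintype.card (Fin k)) (Fin k) (fun i => Fin (n i)) le_rfl hMm
  -- BD Mm ↔ BD X
  have hMmX : MaticAux.BD Mm ↔ MaticAux.BD X := by
    constructor
    · intro h p q hpq
      have h2 := h p q hpq
      rw [hMdef, Matrix.add_apply, MaticAux.BD_one p q hpq, zero_add] at h2
      exact h2
    · intro h p q hpq
      rw [hMdef, Matrix.add_apply, MaticAux.BD_one p q hpq, h p q hpq, zero_add]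
  refine ⟨part1, ?_, ?_, ?_⟩
  · rw [hLHS, hprod]
    exact hle
  · rw [hLHS, hprod, hiff, hMmX]
    exact (hconv2 _).symm
  · intro hDpd
    rw [hLHS, hprod, hiff, hMmX]
    -- BD X ↔ BD C
    have hDiblk : ∀ i, (MaticAux.blk D i).PosDef := fun i =>
      MaticAux.posDef_submatrix_inj hDpd (Sigma.mk i) sigma_mk_injective
    have hdEi : ∀ i, (MaticAux.blk E i).det ≠ 0 := by
      intro i h0
      have h1 : MaticAux.blk E i * MaticAux.blk E i = MaticAux.blk D i := by
        rw [← MaticAux.mul_blk hEbd, hEE]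
      have := (hDiblk i).det_pos.ne'
      rw [← h1, Matrix.det_mul, h0, zero_mul] at this
      exact this rfl
    have hEinvbd : MaticAux.BD E⁻¹ := by
      rw [MaticAux.BD.inv hEbd hdEi]
      exact MaticAux.bdiag_BD _
    have hdE : E.det ≠ 0 := by
      intro h0
      have := hDpd.det_pos.ne'
      rw [← hEE, Matrix.det_mul, h0, zero_mul] at this
      exact this rfl
    have hEi1 : E⁻¹ * E = 1 := Matrix.nonsing_inv_mul _ (by simpa using hdE)
    have hE1i : E * E⁻¹ = 1 := Matrix.mul_nonsing_inv _ (by simpa using hdE)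
    constructor
    · intro hXbd
      have hCinveq : E⁻¹ * X * E⁻¹ = C⁻¹ := by
        rw [hXdef]
        calc E⁻¹ * (E * C⁻¹ * E) * E⁻¹ = (E⁻¹ * E) * C⁻¹ * (E * E⁻¹) := by
              simp only [Matrix.mul_assoc]
          _ = C⁻¹ := by rw [hEi1, hE1i, Matrix.one_mul, Matrix.mul_one]
      have hCinvbd : MaticAux.BD C⁻¹ := by
        rw [← hCinveq]
        exact (hEinvbd.mul hXbd).mul hEinvbd
      have hblkCinv : ∀ i, (MaticAux.blk C⁻¹ i).det ≠ 0 := fun i => (part1 i).det_pos.ne'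
      intro p q hpq
      rw [← Matrix.nonsing_inv_nonsing_inv C (by simpa using hdC),
        MaticAux.BD.inv hCinvbd hblkCinv]
      exact MaticAux.bdiag_BD _ p q hpq
    · intro hCbd
      have hCbd' : MaticAux.BD C := (hconv2 C).mp hCbd
      have hblkC : ∀ i, (MaticAux.blk C i).det ≠ 0 := fun i =>
        (MaticAux.posDef_submatrix_inj hC (Sigma.mk i) sigma_mk_injective).det_pos.ne'
      have hCinvbd : MaticAux.BD C⁻¹ := by
        rw [MaticAux.BD.inv hCbd' hblkC]
        exact MaticAux.bdiag_BD _
      rw [hXdef]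
      exact (hEbd.mul hCinvbd).mul hEbd
end

section
/- In the block setting, let C : Matrix J J ℂ be positive definite. Then (∏_{i} det((C⁻¹)_i))⁻¹ ≤ det C, where (C⁻¹)_i denotes the i-th principal diagonal block of C⁻¹ (each (C⁻¹)_i is positive definite, so its determinant is a positive real). Equality holds if and only if C is block diagonal. -/
open scoped ComplexOrder

open Matrix

section AuxProof

variable {m : Type*} [Fintype m] [DecidableEq m]

lemma aux_det_ofReal {M : Matrix m m ℂ} (hM : M.PosDef) :
    ∃ r : ℝ, 0 < r ∧ M.det = (r : ℂ) := by
  have h := hM.det_pos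
  rw [Complex.lt_def] at h
  exact ⟨M.det.re, by simpa using h.1, (Complex.ext (by simp) (by simpa using h.2.symm))⟩

lemma aux_posDef_of_psd_unit {M : Matrix m m ℂ} (h : M.PosSemidef) (hu : IsUnit M) :
    M.PosDef := by
  refine PosDef.of_dotProduct_mulVec_pos h.1 fun x hx => lt_of_le_of_ne (h.dotProduct_mulVec_nonneg x) (Ne.symm fun h0 => hx ?_)
  have h1 : M *ᵥ x = 0 := (h.dotProduct_mulVec_zero_iff x).mp h0
  have := (Matrix.mulVec_injective_iff_isUnit.mpr hu)
  exact this (by simpa using h1)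

lemma aux_posDef_submatrix {l : Type*} [Fintype l] [DecidableEq l]
    {M : Matrix m m ℂ} (hM : M.PosDef) {e : l → m} (he : Function.Injective e) :
    (M.submatrix e e).PosDef := by
  classical
  set P : Matrix m l ℂ := Matrix.of fun i a => if i = e a then 1 else 0 with hPdef
  have hP : M.submatrix e e = Pᴴ * M * P := by
    ext a b
    simp only [Matrix.mul_apply, conjTranspose_apply, hPdef, Matrix.of_apply,
      Matrix.submatrix_apply]
    simp [apply_ite, Finset.sum_ite_eq, Finset.mul_sum, Finset.sum_mul, mul_comm]
  refine PosDef.of_dotProduct_mulVec_pos ?_ fun x hx => ?_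
  · have h1 := hM.1
    show (M.submatrix e e)ᴴ = _
    rw [conjTranspose_submatrix, h1]
  · have key : star x ⬝ᵥ (M.submatrix e e) *ᵥ x = star (P *ᵥ x) ⬝ᵥ M *ᵥ (P *ᵥ x) := by
      rw [hP, star_mulVec, mulVec_mulVec, Matrix.mul_assoc, ← mulVec_mulVec,
        dotProduct_mulVec]
    rw [key]
    refine hM.dotProduct_mulVec_pos fun hPx => ?_
    obtain ⟨a, ha⟩ := Function.ne_iff.mp hx
    have : (P *ᵥ x) (e a) = x a := by
      simp only [mulVec, dotProduct, hPdef, Matrix.of_apply]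
      rw [Finset.sum_eq_single a (fun b _ hb => by simp [he.ne_iff.mpr (Ne.symm hb)]) (by simp)]
      simp
    rw [hPx] at this
    exact ha (by simpa using this.symm)

lemma aux_one_le_prod {ι : Type*} {s : Finset ι} {f : ι → ℝ} (h1 : ∀ i ∈ s, 1 ≤ f i) :
    1 ≤ ∏ i ∈ s, f i := by
  calc (1:ℝ) = ∏ _i ∈ s, 1 := by simp
  _ ≤ ∏ i ∈ s, f i := Finset.prod_le_prod (by norm_num) h1

lemma aux_prod_one {ι : Type*} {s : Finset ι} {f : ι → ℝ} :
    (∀ i ∈ s, 1 ≤ f i) → ∏ i ∈ s, f i = 1 → ∀ i ∈ s, f i = 1 := by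
  classical
  induction s using Finset.induction_on with
  | empty => simp
  | @insert a s ha ih =>
    intro h1 hp i hi
    rw [Finset.prod_insert ha] at hp
    have hfa : 1 ≤ f a := h1 a (Finset.mem_insert_self a s)
    have hps : 1 ≤ ∏ i ∈ s, f i := aux_one_le_prod fun j hj => h1 j (Finset.mem_insert_of_mem hj)
    have h2 : f a = 1 ∧ ∏ i ∈ s, f i = 1 := by constructor <;> nlinarith
    rcases Finset.mem_insert.mp hi with rfl | hi
    · exact h2.1
    · exact ih (fun j hj => h1 j (Finset.mem_insert_of_mem hj)) h2.2 i hi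

lemma aux_det_one_add_psd {M : Matrix m m ℂ} (hM : M.PosSemidef) :
    ∃ p : ℝ, 1 ≤ p ∧ (1 + M).det = (p : ℂ) ∧ (p = 1 ↔ M = 0) := by
  classical
  have hH := hM.1
  set U : Matrix m m ℂ := (Matrix.IsHermitian.eigenvectorUnitary hH : Matrix m m ℂ) with hUdef
  set D0 : Matrix m m ℂ := diagonal ((fun r : ℝ => (r : ℂ)) ∘ hH.eigenvalues) with hD0def
  have hUU : U * star U = 1 :=
    (Matrix.mem_unitaryGroup_iff).mp (Matrix.IsHermitian.eigenvectorUnitary hH).2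
  have hspec : M = U * D0 * star U := hH.spectral_theorem
  have hdecomp : 1 + M = U * (1 + D0) * star U := by
    rw [Matrix.mul_add, Matrix.add_mul, Matrix.mul_one, hUU, ← hspec]
  have hdet : (1 + M).det = ((∏ i, (1 + hH.eigenvalues i) : ℝ) : ℂ) := by
    rw [hdecomp, det_mul, det_mul]
    have hcomm : U.det * (1 + D0).det * (star U).det
        = (1 + D0).det * (U.det * (star U).det) := by ring
    rw [hcomm, ← det_mul, hUU, det_one, mul_one, hD0def, ← Matrix.diagonal_one,
      Matrix.diagonal_add, det_diagonal]
    push_cast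
    rfl
  have h1 : ∀ i ∈ Finset.univ, 1 ≤ 1 + hH.eigenvalues i :=
    fun i _ => by linarith [hM.eigenvalues_nonneg i]
  refine ⟨∏ i, (1 + hH.eigenvalues i), aux_one_le_prod h1, hdet, ?_, fun h0 => ?_⟩
  · intro hp
    have hev : ∀ i, hH.eigenvalues i = 0 := fun i => by
      have := aux_prod_one h1 hp i (Finset.mem_univ i); linarith
    have : D0 = (0 : Matrix m m ℂ) := by
      rw [hD0def]; ext i j; by_cases hij : i = j <;> simp [diagonal, hij, hev]
    rw [hspec, this, Matrix.mul_zero, Matrix.zero_mul]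
  · have h2 : (1 + M).det = 1 := by rw [h0, add_zero, det_one]
    rw [h2] at hdet
    exact_mod_cast hdet.symm

open scoped MatrixOrder in
lemma aux_det_add_psd {X E : Matrix m m ℂ} (hX : X.PosDef) (hE : E.PosSemidef) :
    ∃ x p : ℝ, 0 < x ∧ 1 ≤ p ∧ X.det = (x : ℂ) ∧ (X + E).det = ((x * p : ℝ) : ℂ) ∧
      (p = 1 ↔ E = 0) := by
  classical
  obtain ⟨x, hx, hxdet⟩ := aux_det_ofReal hX
  set S := CFC.sqrt X with hSdef
  have hSS : S * S = X := CFC.sqrt_mul_sqrt_self X (Matrix.nonneg_iff_posSemidef.mpr hX.posSemidef)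
  have hSH : S.IsHermitian := (Matrix.nonneg_iff_posSemidef.mp (CFC.sqrt_nonneg X)).1
  have hdS : IsUnit S.det := by
    have : S.det * S.det = X.det := by rw [← det_mul, hSS]
    have hXd : X.det ≠ 0 := hX.det_pos.ne'
    exact IsUnit.mk0 _ fun h => hXd (by rw [← this, h, mul_zero])
  set M := S⁻¹ * E * S⁻¹ with hMdef
  have hSinvH : (S⁻¹)ᴴ = S⁻¹ := hSH.inv.eq
  have hMpsd : M.PosSemidef := by
    have := hE.conjTranspose_mul_mul_same (B := S⁻¹)
    rwa [hSinvH] at this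
  have hSMS : S * M * S = E := by
    rw [hMdef]
    calc S * (S⁻¹ * E * S⁻¹) * S = (S * S⁻¹) * E * (S⁻¹ * S) := by
          simp only [Matrix.mul_assoc]
    _ = E := by rw [Matrix.mul_nonsing_inv _ hdS, Matrix.nonsing_inv_mul _ hdS,
          Matrix.one_mul, Matrix.mul_one]
  have hdecomp : X + E = S * (1 + M) * S := by
    rw [Matrix.mul_add, Matrix.add_mul, Matrix.mul_one, hSS, hSMS]
  obtain ⟨p, hp1, hpdet, hpiff⟩ := aux_det_one_add_psd hMpsd
  have hdet : (X + E).det = ((x * p : ℝ) : ℂ) := by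
    rw [hdecomp, det_mul, det_mul]
    have : S.det * (1 + M).det * S.det = (S.det * S.det) * (1 + M).det := by ring
    rw [this, ← det_mul, hSS, hxdet, hpdet]
    push_cast
    ring
  refine ⟨x, p, hx, hp1, hxdet, hdet, hpiff.trans ⟨fun hM0 => ?_, fun hE0 => ?_⟩⟩
  · rw [← hSMS, hM0, Matrix.mul_zero, Matrix.zero_mul]
  · rw [hMdef, hE0, Matrix.mul_zero, Matrix.zero_mul]

lemma aux_fischer_sum {α β : Type*} [Fintype α] [DecidableEq α] [Fintype β] [DecidableEq β]
    {D : Matrix (α ⊕ β) (α ⊕ β) ℂ} (hD : D.PosDef) :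
    ∃ a d r : ℝ, 0 < a ∧ 0 < d ∧ 0 < r ∧ r ≤ a * d ∧
      D.toBlocks₁₁.det = (a : ℂ) ∧ D.toBlocks₂₂.det = (d : ℂ) ∧ D.det = (r : ℂ) ∧
      (r = a * d ↔ D.toBlocks₁₂ = 0) := by
  classical
  set A := D.toBlocks₁₁ with hAdef
  set B := D.toBlocks₁₂ with hBdef
  set Dd := D.toBlocks₂₂ with hDddef
  have hA : A.PosDef := by
    have : A = D.submatrix Sum.inl Sum.inl := by ext i j; rfl
    rw [this]; exact aux_posDef_submatrix hD Sum.inl_injective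
  have hDd : Dd.PosDef := by
    have : Dd = D.submatrix Sum.inr Sum.inr := by ext i j; rfl
    rw [this]; exact aux_posDef_submatrix hD Sum.inr_injective
  have hBH : D.toBlocks₂₁ = Bᴴ := by
    ext i j
    have := congrFun (congrFun hD.1 (Sum.inr i)) (Sum.inl j)
    rw [conjTranspose_apply] at this
    simpa [hBdef, toBlocks₂₁, toBlocks₁₂, conjTranspose_apply] using this.symm
  have hfb : D = fromBlocks A B Bᴴ Dd := by rw [hAdef, hBdef, hDddef, ← hBH, fromBlocks_toBlocks]
  haveI : Invertible A := A.invertibleOfIsUnitDet hA.det_pos.ne'.isUnit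
  set X := Dd - Bᴴ * A⁻¹ * B with hXdef
  have hdetD : D.det = A.det * X.det := by
    rw [hfb, det_fromBlocks₁₁, invOf_eq_nonsing_inv]
  have hXpsd : X.PosSemidef := by
    rw [hXdef]
    exact (PosDef.fromBlocks₁₁ B Dd hA).mp (hfb ▸ hD.posSemidef)
  have hXdetne : X.det ≠ 0 := by
    intro h
    have : D.det = 0 := by rw [hdetD, h, mul_zero]
    exact hD.det_pos.ne' this
  have hXpos : X.PosDef := aux_posDef_of_psd_unit hXpsd
    ((Matrix.isUnit_iff_isUnit_det _).mpr (IsUnit.mk0 _ hXdetne))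
  have hEpsd : (Bᴴ * A⁻¹ * B).PosSemidef := hA.inv.posSemidef.conjTranspose_mul_mul_same B
  obtain ⟨x, p, hx, hp, hXdet, hXE, hpiff⟩ := aux_det_add_psd hXpos hEpsd
  have hXEeq : X + Bᴴ * A⁻¹ * B = Dd := by rw [hXdef, sub_add_cancel]
  obtain ⟨a, ha, hAdet⟩ := aux_det_ofReal hA
  have hDddet : Dd.det = ((x * p : ℝ) : ℂ) := by rw [← hXEeq, hXE]
  have hE0iffB0 : Bᴴ * A⁻¹ * B = 0 ↔ B = 0 := by
    constructor
    · intro hE0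
      ext i j
      simp only [Matrix.zero_apply]
      by_contra hBij
      have hcol : (fun a => B a j) ≠ 0 := fun h => hBij (by simpa using congrFun h i)
      have hpos := hA.inv.dotProduct_mulVec_pos hcol
      have hentry : (Bᴴ * A⁻¹ * B) j j
          = star (fun a => B a j) ⬝ᵥ (A⁻¹ *ᵥ fun a => B a j) := by
        simp only [Matrix.mul_apply, dotProduct, mulVec, conjTranspose_apply,
          Finset.sum_mul, Finset.mul_sum, dotProduct]
        rw [Finset.sum_comm]
        congr 1; ext u; congr 1; ext v; simp only [Pi.star_apply]; ring
      rw [hE0] at hentry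
      simp only [Matrix.zero_apply] at hentry
      rw [← hentry] at hpos
      exact lt_irrefl _ hpos
    · intro h; rw [h, Matrix.mul_zero]
  refine ⟨a, x * p, a * x, ha, by positivity, by positivity, ?_, hAdet, hDddet, ?_, ?_⟩
  · calc a * x = a * x * 1 := by ring
    _ ≤ a * x * p := mul_le_mul_of_nonneg_left hp (by positivity)
    _ = a * (x * p) := by ring
  · rw [hdetD, hAdet, hXdet]; push_cast; ring
  · rw [← hpiff.trans hE0iffB0]
    constructor
    · intro h
      have hxp : x = x * p := mul_left_cancel₀ ha.ne' h
      have h2 : x * 1 = x * p := by linarith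
      exact (mul_left_cancel₀ hx.ne' h2).symm
    · intro h; rw [h]; ring

def aux_e {k : ℕ} (n : Fin (k + 1) → ℕ) :
    ((i : Fin (k + 1)) × Fin (n i)) ≃ (Fin (n 0) ⊕ (i : Fin k) × Fin (n i.succ)) where
  toFun p := Fin.cases (motive := fun i => Fin (n i) → Fin (n 0) ⊕ (i : Fin k) × Fin (n i.succ))
      Sum.inl (fun i a => Sum.inr ⟨i, a⟩) p.1 p.2
  invFun q := q.elim (fun a => ⟨0, a⟩) (fun q => ⟨q.1.succ, q.2⟩)
  left_inv p := by
    rcases p with ⟨i, a⟩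
    induction i using Fin.cases with
    | zero => simp
    | succ i => simp
  right_inv q := by rcases q with a | ⟨i, a⟩ <;> simp

lemma aux_fischer_sigma : ∀ (k : ℕ) (n : Fin k → ℕ)
    (D : Matrix ((i : Fin k) × Fin (n i)) ((i : Fin k) × Fin (n i)) ℂ), D.PosDef →
    ∃ (r : Fin k → ℝ) (s : ℝ), (∀ i, 0 < r i ∧ (diagBlock D i).det = (r i : ℂ)) ∧ 0 < s ∧
      D.det = (s : ℂ) ∧ s ≤ ∏ i, r i ∧ (s = ∏ i, r i ↔ IsBlockDiagonal D) := by
  intro k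
  induction k with
  | zero =>
    intro n D _
    haveI : IsEmpty ((i : Fin 0) × Fin (n i)) := ⟨fun p => p.1.elim0⟩
    exact ⟨fun i => i.elim0, 1, fun i => i.elim0, one_pos, by simp [Matrix.det_isEmpty],
      by simp, ⟨fun _ p _ _ => p.1.elim0, fun _ => by simp⟩⟩
  | succ k ih =>
    intro n D hD
    set e := aux_e n with hedef
    set D' := D.submatrix ⇑e.symm ⇑e.symm with hD'def
    have hD' : D'.PosDef := aux_posDef_submatrix hD e.symm.injective
    have hdetD' : D'.det = D.det := det_submatrix_equiv_self e.symm D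
    obtain ⟨a, d, r₀, ha, hd, hr₀, hle, hAdet, hDddet, hDdet, heq⟩ := aux_fischer_sum hD'
    -- identification of blocks
    have hblk0 : D'.toBlocks₁₁ = diagBlock D 0 := by ext i j; rfl
    set T := D'.toBlocks₂₂ with hTdef
    have hT : T.PosDef := by
      have : T = D'.submatrix Sum.inr Sum.inr := by ext i j; rfl
      rw [this]; exact aux_posDef_submatrix hD' Sum.inr_injective
    obtain ⟨rT, sT, hrT, hsT, hTdet, hTle, hTeq⟩ := ih (fun i => n i.succ) T hT
    have hdsT : d = sT := by
      have := hDddet.symm.trans hTdet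
      exact_mod_cast this
    have hdiagsucc : ∀ i : Fin k, diagBlock T i = diagBlock D i.succ := by
      intro i; ext a b; rfl
    have hprodcases : ∏ i, (Fin.cases a rT : ∀ i : Fin (k+1), ℝ) i = a * ∏ i, rT i := by
      rw [Fin.prod_univ_succ]; simp
    refine ⟨Fin.cases a rT, r₀, ?_, hr₀, by rw [← hdetD']; exact hDdet, ?_, ?_⟩
    · intro i
      induction i using Fin.cases with
      | zero => exact ⟨ha, by rw [← hblk0]; simpa using hAdet⟩
      | succ i =>
        refine ⟨(hrT i).1, ?_⟩
        rw [← hdiagsucc i]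
        simpa using (hrT i).2
    · rw [hprodcases]
      calc r₀ ≤ a * d := hle
      _ = a * sT := by rw [hdsT]
      _ ≤ a * ∏ i, rT i := mul_le_mul_of_nonneg_left hTle ha.le
    · rw [hprodcases]
      have step1 : r₀ = a * ∏ i, rT i ↔ (D'.toBlocks₁₂ = 0 ∧ IsBlockDiagonal T) := by
        constructor
        · intro h
          have h1 : a * sT ≤ a * ∏ i, rT i := mul_le_mul_of_nonneg_left hTle ha.le
          have h2 : r₀ ≤ a * sT := by rw [← hdsT]; exact hle
          have h3 : a * sT = a * ∏ i, rT i := le_antisymm h1 (by linarith)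
          have h4 : sT = ∏ i, rT i := mul_left_cancel₀ ha.ne' h3
          have h5 : r₀ = a * d := by rw [hdsT]; linarith
          exact ⟨heq.mp h5, hTeq.mp h4⟩
        · rintro ⟨hB0, hTbd⟩
          have h4 : sT = ∏ i, rT i := hTeq.mpr hTbd
          have h5 : r₀ = a * d := heq.mpr hB0
          rw [h5, hdsT, h4]
      rw [step1]
      constructor
      · rintro ⟨h12, hTbd⟩ p q hpq
        rcases p with ⟨i, a'⟩
        rcases q with ⟨j, b'⟩
        rcases Fin.eq_zero_or_eq_succ i with rfl | ⟨i', rfl⟩ <;>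
          rcases Fin.eq_zero_or_eq_succ j with rfl | ⟨j', rfl⟩
        · exact absurd rfl hpq
        · exact congrFun (congrFun h12 a') ⟨j', b'⟩
        · have h1 : D ⟨0, b'⟩ ⟨i'.succ, a'⟩ = 0 := congrFun (congrFun h12 b') ⟨i', a'⟩
          have h2 := congrFun (congrFun hD.1 ⟨i'.succ, a'⟩) ⟨0, b'⟩
          rw [conjTranspose_apply] at h2
          rw [← h2, h1, star_zero]
        · exact hTbd ⟨i', a'⟩ ⟨j', b'⟩ fun hh => hpq (by simpa using congrArg Fin.succ hh)
      · intro h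
        constructor
        · ext i q
          show D ⟨0, i⟩ ⟨q.1.succ, q.2⟩ = 0
          exact h _ _ (Fin.succ_ne_zero q.1).symm
        · intro p q hpq
          exact h ⟨p.1.succ, p.2⟩ ⟨q.1.succ, q.2⟩ fun hh => hpq (Fin.succ_injective _ hh)

lemma aux_diagBlock_posDef {k : ℕ} {n : Fin k → ℕ}
    {C : Matrix ((i : Fin k) × Fin (n i)) ((i : Fin k) × Fin (n i)) ℂ} (hC : C.PosDef)
    (i : Fin k) : (diagBlock C i).PosDef := by
  have h : diagBlock C i = C.submatrix (Sigma.mk i) (Sigma.mk i) := by ext a b; rfl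
  rw [h]; exact aux_posDef_submatrix hC sigma_mk_injective

lemma aux_inv_blockDiag {k : ℕ} {n : Fin k → ℕ}
    {C : Matrix ((i : Fin k) × Fin (n i)) ((i : Fin k) × Fin (n i)) ℂ} (hC : C.PosDef)
    (h : IsBlockDiagonal C) : IsBlockDiagonal C⁻¹ := by
  classical
  have hCeq : C = blockDiagonal' (fun i => diagBlock C i) := by
    ext ⟨i, a⟩ ⟨j, b⟩
    by_cases hij : i = j
    · subst hij; rw [blockDiagonal'_apply_eq]; rfl
    · rw [blockDiagonal'_apply_ne _ _ _ hij]; exact h _ _ hij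
  have hinv : blockDiagonal' (fun i => (diagBlock C i)⁻¹) * C = 1 := by
    nth_rewrite 2 [hCeq]
    rw [← blockDiagonal'_mul]
    have h1 : (fun i => (diagBlock C i)⁻¹ * diagBlock C i)
        = fun i => (1 : Matrix (Fin (n i)) (Fin (n i)) ℂ) :=
      funext fun i => nonsing_inv_mul _ (aux_diagBlock_posDef hC i).det_pos.ne'.isUnit
    rw [h1]
    exact blockDiagonal'_one
  rw [inv_eq_left_inv hinv]
  rintro ⟨i, a⟩ ⟨j, b⟩ hpq
  exact blockDiagonal'_apply_ne _ _ _ hpq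


end AuxProof

/-- Fischer-type inequality for the inverse: for `C` positive definite (in the block
setting), each principal diagonal block `(C⁻¹)ᵢ` of `C⁻¹` is positive definite and
`(∏ i, det((C⁻¹)ᵢ))⁻¹ ≤ det C`, with equality iff `C` is block diagonal. -/
theorem det_inverse_blocks_inequality {k : ℕ} {n : Fin k → ℕ} (hn : ∀ i, 0 < n i)
    {C : Matrix ((i : Fin k) × Fin (n i)) ((i : Fin k) × Fin (n i)) ℂ} (hC : C.PosDef) :
    (∀ i, (diagBlock C⁻¹ i).PosDef) ∧
      (∏ i, (diagBlock C⁻¹ i).det)⁻¹ ≤ C.det ∧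
      ((∏ i, (diagBlock C⁻¹ i).det)⁻¹ = C.det ↔ IsBlockDiagonal C) := by
  classical
  have hD : (C⁻¹).PosDef := hC.inv
  obtain ⟨r, s, hr, hs, hsdet, hsle, hseq⟩ := aux_fischer_sigma k n C⁻¹ hD
  obtain ⟨c, hc, hcdet⟩ := aux_det_ofReal hC
  have hdetinv : (C⁻¹).det = ((c⁻¹ : ℝ) : ℂ) := by
    rw [Matrix.det_nonsing_inv, hcdet, Ring.inverse_eq_inv, Complex.ofReal_inv]
  have hsc : s = c⁻¹ := by
    have h0 := hsdet.symm.trans hdetinv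
    exact_mod_cast h0
  have hprodeq : ∏ i, (diagBlock C⁻¹ i).det = ((∏ i, r i : ℝ) : ℂ) := by
    rw [Complex.ofReal_prod]
    exact Finset.prod_congr rfl fun i _ => (hr i).2
  have hP : 0 < ∏ i, r i := Finset.prod_pos fun i _ => (hr i).1
  have hble : c⁻¹ ≤ ∏ i, r i := hsc ▸ hsle
  refine ⟨fun i => aux_diagBlock_posDef hD i, ?_, ?_⟩
  · rw [hprodeq, hcdet, ← Complex.ofReal_inv]
    have hgoal : (∏ i, r i)⁻¹ ≤ c := by
      rw [inv_le_comm₀ hP hc] at *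
      exact hble
    exact_mod_cast hgoal
  · rw [hprodeq, hcdet, ← Complex.ofReal_inv]
    have hcast : (((∏ i, r i)⁻¹ : ℝ) : ℂ) = ((c : ℝ) : ℂ) ↔ ((∏ i, r i)⁻¹ : ℝ) = c :=
      Complex.ofReal_inj
    rw [hcast]
    have hiff1 : ((∏ i, r i)⁻¹ : ℝ) = c ↔ s = ∏ i, r i := by
      rw [hsc]
      constructor
      · intro h; rw [← h, inv_inv]
      · intro h; rw [← h, inv_inv]
    rw [hiff1, hseq]
    constructor
    · intro h
      have h2 := aux_inv_blockDiag hD h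
      rwa [Matrix.nonsing_inv_nonsing_inv C hC.det_pos.ne'.isUnit] at h2
    · exact aux_inv_blockDiag hC
end

section
/- In the block setting, let A : Matrix J J ℂ be positive definite and let Φ denote the pinching. Then Φ(A) and Φ(A⁻¹) are positive definite (hence invertible), and Φ(A)⁻¹ ≤ Φ(A⁻¹) in the Loewner order. Equality Φ(A)⁻¹ = Φ(A⁻¹) holds if and only if A is block diagonal (equivalently Φ(A) = A). -/
open scoped ComplexOrder

section Aux

open Matrix

variable {k : ℕ} {n : Fin k → ℕ}

/-- restriction of a vector to block `i` -/
def br (x : ((i : Fin k) × Fin (n i)) → ℂ) (i : Fin k) : ((i : Fin k) × Fin (n i)) → ℂ :=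
  fun p => if p.1 = i then x p else 0

lemma pinch_dot (C : Matrix ((i : Fin k) × Fin (n i)) ((i : Fin k) × Fin (n i)) ℂ)
    (y x : ((i : Fin k) × Fin (n i)) → ℂ) :
    star y ⬝ᵥ pinch C *ᵥ x = ∑ i, star (br y i) ⬝ᵥ C *ᵥ (br x i) := by
  have h : ∀ (p q : (i : Fin k) × Fin (n i)),
      (∑ i, star (if p.1 = i then y p else 0) * (C p q * if q.1 = i then x q else 0))
        = star (y p) * ((if p.1 = q.1 then C p q else 0) * x q) := by
    intro p q
    rw [Finset.sum_congr rfl (fun i _ =>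
      show star (if p.1 = i then y p else 0) * (C p q * if q.1 = i then x q else 0)
        = if p.1 = i then (if q.1 = i then star (y p) * (C p q * x q) else 0) else 0 by
      split_ifs <;> simp)]
    rw [Finset.sum_ite_eq]
    simp only [Finset.mem_univ, if_true]
    split_ifs with h1 h2 h3 <;> simp_all [eq_comm]
  simp only [dotProduct, mulVec, pinch, br, Pi.star_apply, Finset.mul_sum]
  conv_rhs => rw [Finset.sum_comm]
  refine Finset.sum_congr rfl fun p _ => ?_
  rw [Finset.sum_comm]
  exact Finset.sum_congr rfl fun q _ => (h p q).symm

lemma dot_br (y x : ((i : Fin k) × Fin (n i)) → ℂ) :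
    star y ⬝ᵥ x = ∑ i, star (br y i) ⬝ᵥ (br x i) := by
  have h : ∀ (p : (i : Fin k) × Fin (n i)),
      (∑ i, star (if p.1 = i then y p else 0) * (if p.1 = i then x p else 0))
        = star (y p) * x p := by
    intro p
    rw [Finset.sum_congr rfl (fun i _ =>
      show star (if p.1 = i then y p else 0) * (if p.1 = i then x p else 0)
        = if p.1 = i then star (y p) * x p else 0 by split_ifs <;> simp)]
    rw [Finset.sum_ite_eq]
    simp
  simp only [dotProduct, br, Pi.star_apply]
  rw [Finset.sum_comm]
  exact Finset.sum_congr rfl fun p _ => (h p).symm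

lemma pinch_isHermitian {C : Matrix ((i : Fin k) × Fin (n i)) ((i : Fin k) × Fin (n i)) ℂ}
    (h : C.IsHermitian) : (pinch C).IsHermitian := by
  ext p q
  simp only [conjTranspose_apply, pinch]
  by_cases hpq : p.1 = q.1
  · rw [if_pos hpq, if_pos hpq.symm, ← conjTranspose_apply, h.eq]
  · rw [if_neg hpq, if_neg (fun hh => hpq hh.symm), star_zero]

lemma pinch_one : pinch (1 : Matrix ((i : Fin k) × Fin (n i)) ((i : Fin k) × Fin (n i)) ℂ) = 1 := by
  ext p q
  simp only [pinch, one_apply]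
  split_ifs with h1 h2 h3 <;> first | rfl | exact absurd (congrArg Sigma.fst h3) h1

lemma blockDiag_mul_pinch {C D : Matrix ((i : Fin k) × Fin (n i)) ((i : Fin k) × Fin (n i)) ℂ}
    (h : IsBlockDiagonal C) : pinch (C * D) = C * pinch D := by
  ext p q
  simp only [pinch, mul_apply]
  by_cases hpq : p.1 = q.1
  · simp only [hpq, if_true]
    refine Finset.sum_congr rfl fun r _ => ?_
    by_cases hr : r.1 = q.1
    · rw [if_pos hr]
    · rw [if_neg hr, mul_zero, h p r (by rw [hpq]; exact fun hh => hr hh.symm), zero_mul]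
  · simp only [hpq, if_false]
    refine (Finset.sum_eq_zero fun r _ => ?_).symm
    by_cases hr : r.1 = q.1
    · rw [h p r (fun hh => hpq (hh.trans hr)), zero_mul]
    · rw [if_neg hr, mul_zero]

lemma pinch_eq_self_of_blockDiag {C : Matrix ((i : Fin k) × Fin (n i)) ((i : Fin k) × Fin (n i)) ℂ}
    (h : IsBlockDiagonal C) : pinch C = C := by
  ext p q
  simp only [pinch]
  by_cases hpq : p.1 = q.1
  · rw [if_pos hpq]
  · rw [if_neg hpq, (h p q hpq).symm]

lemma pinch_posDef {M : Matrix ((i : Fin k) × Fin (n i)) ((i : Fin k) × Fin (n i)) ℂ}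
    (hM : M.PosDef) : (pinch M).PosDef := by
  refine PosDef.of_dotProduct_mulVec_pos (pinch_isHermitian hM.1) fun x hx => ?_
  rw [pinch_dot]
  refine Finset.sum_pos' (fun i _ => hM.posSemidef.dotProduct_mulVec_nonneg _) ?_
  obtain ⟨p, hp⟩ := Function.ne_iff.1 hx
  refine ⟨p.1, Finset.mem_univ _, hM.dotProduct_mulVec_pos fun h0 => hp ?_⟩
  have := congrFun h0 p
  simpa [br] using this

lemma herm_dot {M : Matrix ((i : Fin k) × Fin (n i)) ((i : Fin k) × Fin (n i)) ℂ}
    (hM : M.IsHermitian) (w y : ((i : Fin k) × Fin (n i)) → ℂ) :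
    star (M *ᵥ w) ⬝ᵥ y = star w ⬝ᵥ (M *ᵥ y) := by
  rw [star_mulVec, hM.eq, dotProduct_mulVec]

lemma key_identity {A : Matrix ((i : Fin k) × Fin (n i)) ((i : Fin k) × Fin (n i)) ℂ}
    (hA : A.PosDef) (x : ((i : Fin k) × Fin (n i)) → ℂ) :
    ∑ j, star (A⁻¹ *ᵥ br x j - br ((pinch A)⁻¹ *ᵥ x) j) ⬝ᵥ
        A *ᵥ (A⁻¹ *ᵥ br x j - br ((pinch A)⁻¹ *ᵥ x) j)
      = star x ⬝ᵥ pinch A⁻¹ *ᵥ x - star x ⬝ᵥ (pinch A)⁻¹ *ᵥ x := by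
  have hB : (pinch A).PosDef := pinch_posDef hA
  have hAd : IsUnit A.det := (Matrix.isUnit_iff_isUnit_det A).1 hA.isUnit
  have hBd : IsUnit (pinch A).det := (Matrix.isUnit_iff_isUnit_det _).1 hB.isUnit
  set u : ((i : Fin k) × Fin (n i)) → ℂ := (pinch A)⁻¹ *ᵥ x with hu
  have expand : ∀ j, star (A⁻¹ *ᵥ br x j - br u j) ⬝ᵥ A *ᵥ (A⁻¹ *ᵥ br x j - br u j)
      = star (br x j) ⬝ᵥ A⁻¹ *ᵥ br x j - star (br x j) ⬝ᵥ br u j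
        - star (br u j) ⬝ᵥ br x j + star (br u j) ⬝ᵥ A *ᵥ br u j := by
    intro j
    set w := br x j
    set v := br u j
    have h1 : A *ᵥ (A⁻¹ *ᵥ w - v) = w - A *ᵥ v := by
      rw [mulVec_sub, mulVec_mulVec, mul_nonsing_inv _ hAd, one_mulVec]
    have h2 : star (A⁻¹ *ᵥ w) ⬝ᵥ (w - A *ᵥ v) = star w ⬝ᵥ A⁻¹ *ᵥ w - star w ⬝ᵥ v := by
      rw [herm_dot hA.1.inv, mulVec_sub, dotProduct_sub, mulVec_mulVec,
        nonsing_inv_mul _ hAd, one_mulVec]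
    have h3 : star v ⬝ᵥ (w - A *ᵥ v) = star v ⬝ᵥ w - star v ⬝ᵥ A *ᵥ v := dotProduct_sub _ _ _
    rw [h1, star_sub, sub_dotProduct, h2, h3]
    ring
  rw [Finset.sum_congr rfl (fun j _ => expand j)]
  simp only [Finset.sum_sub_distrib, Finset.sum_add_distrib]
  rw [← pinch_dot, ← dot_br, ← dot_br, ← pinch_dot]
  have h4 : star u ⬝ᵥ pinch A *ᵥ u = star u ⬝ᵥ x := by
    rw [hu, mulVec_mulVec, mul_nonsing_inv _ hBd, one_mulVec]
  have hsym : star u ⬝ᵥ x = star x ⬝ᵥ u := by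
    rw [hu, herm_dot hB.1.inv]
  rw [h4, hsym]
  ring

end Aux

open Matrix

/-- **Choi's inequality for the pinching.** For a positive definite matrix `A` in the
block setting, `Φ(A)` and `Φ(A⁻¹)` are positive definite and `Φ(A)⁻¹ ≤ Φ(A⁻¹)` in the
Loewner order, with equality iff `A` is block diagonal (equivalently `Φ(A) = A`). -/
theorem pinch_inv_le_pinch_of_inv {k : ℕ} {n : Fin k → ℕ} (hn : ∀ i, 0 < n i)
    {A : Matrix ((i : Fin k) × Fin (n i)) ((i : Fin k) × Fin (n i)) ℂ}
    (hA : A.PosDef) :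
    (pinch A).PosDef ∧ (pinch A⁻¹).PosDef ∧
      (pinch A⁻¹ - (pinch A)⁻¹).PosSemidef ∧
      ((pinch A)⁻¹ = pinch A⁻¹ ↔ IsBlockDiagonal A) := by
  have hB : (pinch A).PosDef := pinch_posDef hA
  have hAinv : (A⁻¹).PosDef := hA.inv
  have hPinv : (pinch A⁻¹).PosDef := pinch_posDef hAinv
  have hAd : IsUnit A.det := (Matrix.isUnit_iff_isUnit_det A).1 hA.isUnit
  refine ⟨hB, hPinv, PosSemidef.of_dotProduct_mulVec_nonneg (hPinv.1.sub hB.1.inv) fun x => ?_, ?_, ?_⟩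
  · rw [sub_mulVec, dotProduct_sub, ← key_identity hA x]
    exact Finset.sum_nonneg fun j _ => hA.posSemidef.dotProduct_mulVec_nonneg _
  · intro hEq
    have hAinvEq : A⁻¹ = pinch A⁻¹ := by
      ext q p
      set x : ((i : Fin k) × Fin (n i)) → ℂ := Pi.single p (1 : ℂ) with hxdef
      set u : ((i : Fin k) × Fin (n i)) → ℂ := (pinch A)⁻¹ *ᵥ x with hu
      have hsum : (∑ j, star (A⁻¹ *ᵥ br x j - br u j) ⬝ᵥ
          A *ᵥ (A⁻¹ *ᵥ br x j - br u j)) = 0 := by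
        rw [key_identity hA x, hEq, sub_self]
      have hzero := (Finset.sum_eq_zero_iff_of_nonneg
        (fun j _ => hA.posSemidef.dotProduct_mulVec_nonneg _)).1 hsum p.1 (Finset.mem_univ _)
      have hz : A⁻¹ *ᵥ br x p.1 - br u p.1 = 0 := by
        by_contra hne
        exact absurd hzero (ne_of_gt (hA.dotProduct_mulVec_pos hne))
      have hbx : br x p.1 = x := by
        funext r
        by_cases hr : r.1 = p.1
        · simp [br, hr]
        · have : r ≠ p := fun hh => hr (congrArg Sigma.fst hh)
          simp [br, hr, hxdef, Pi.single_apply, this]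
      have huval : u = fun r => pinch A⁻¹ r p := by
        rw [hu, hEq, hxdef, mulVec_single]
        funext r; simp
      have hbu : br u p.1 = u := by
        funext r
        by_cases hr : r.1 = p.1
        · simp [br, hr]
        · simp only [br, hr, if_false]
          rw [huval]
          exact (if_neg hr).symm
      rw [hbx, hbu] at hz
      have hcol : A⁻¹ *ᵥ x = u := sub_eq_zero.1 hz
      have := congrFun hcol q
      rw [huval] at this
      rw [hxdef, mulVec_single] at this
      simpa using this
    have hBDinv : IsBlockDiagonal A⁻¹ := fun p q h => by
      rw [hAinvEq]; exact if_neg h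
    have h1 : A⁻¹ * pinch A = 1 := by
      have := blockDiag_mul_pinch (D := A) hBDinv
      rw [nonsing_inv_mul _ hAd, pinch_one] at this
      exact this.symm
    have h2 : pinch A = A := by
      have h3 := inv_eq_right_inv h1
      rw [nonsing_inv_nonsing_inv _ hAd] at h3
      exact h3.symm
    intro p q hpq
    rw [← h2]
    exact if_neg hpq
  · intro hBD
    have h1 : A * pinch A⁻¹ = 1 := by
      have := blockDiag_mul_pinch (D := A⁻¹) hBD
      rw [mul_nonsing_inv _ hAd, pinch_one] at this
      exact this.symm
    rw [pinch_eq_self_of_blockDiag hBD]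
    exact inv_eq_right_inv h1
end
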